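/- arXiv:1607.06395 — 6 statements merged into one kernel-verified Lean document; each statement's English description precedes it below -/
import Mathlib

section
/- The function d_{S,k,Λ} is an extended metric on X × G: it is symmetric, satisfies the triangle inequality, vanishes on the diagonal, and satisfies d_{S,k,Λ}((x,g),(y,h)) > 0 whenever (x,g) ≠ (y,h). -/
open scoped ENNReal

structure HomotopyCoherentAction (G : Type*) [Group G] (X : Type*) [TopologicalSpace X] where
  Γ : List (G × unitInterval) → G → X → X
  continuous' : ∀ (k : ℕ) (γ : Fin k → G) (γ₀ : G),
    Continuous fun p : (Fin k → unitInterval) × X =>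
      Γ (List.ofFn fun i => (γ i, p.1 i)) γ₀ p.2
  split : ∀ (L₁ L₂ : List (G × unitInterval)) (γ γ₀ : G) (x : X),
    Γ (L₁ ++ (γ, 0) :: L₂) γ₀ x = Γ L₁ γ (Γ L₂ γ₀ x)
  mul_mid : ∀ (L₁ L₂ : List (G × unitInterval)) (γ γ' : G) (t : unitInterval) (γ₀ : G) (x : X),
    Γ (L₁ ++ (γ, 1) :: (γ', t) :: L₂) γ₀ x = Γ (L₁ ++ (γ * γ', t) :: L₂) γ₀ x
  mul_last : ∀ (L₁ : List (G × unitInterval)) (γ γ₀ : G) (x : X),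
    Γ (L₁ ++ [(γ, 1)]) γ₀ x = Γ L₁ (γ * γ₀) x
  base_one : ∀ (L : List (G × unitInterval)) (γ₁ : G) (t₁ : unitInterval) (x : X),
    Γ (L ++ [(γ₁, t₁)]) 1 x = Γ L γ₁ x
  unit_mid : ∀ (L₁ L₂ : List (G × unitInterval)) (γ' : G) (t' t : unitInterval) (γ₀ : G) (x : X),
    Γ (L₁ ++ (γ', t') :: (1, t) :: L₂) γ₀ x = Γ (L₁ ++ (γ', t' * t) :: L₂) γ₀ x
  unit_head : ∀ (L : List (G × unitInterval)) (t : unitInterval) (γ₀ : G) (x : X),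
    Γ ((1, t) :: L) γ₀ x = Γ L γ₀ x
  unit_nil : ∀ x : X, Γ [] 1 x = x

variable {G : Type*} [Group G] {X : Type*}

/-- `Γ(r_k, t_k, …, r_1, t_1, r_0, z)` for `r : Fin (k+1) → G`, `t : Fin k → [0,1]`. -/
def gammaWord [TopologicalSpace X] (A : HomotopyCoherentAction G X) {k : ℕ}
    (r : Fin (k + 1) → G) (t : Fin k → unitInterval) (z : X) : X :=
  A.Γ ((List.ofFn fun j : Fin k => (r j.succ, t j)).reverse) (r 0) z

/-- The condition that the data `(xs, zs, a, b)` forms an admissible chain from `(x,g)` to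
`(y,h)` in the definition of the extended metric `d_{S,k,Λ}`. -/
def ChainCond [MetricSpace X] (A : HomotopyCoherentAction G X) (S : Set G) (k : ℕ)
    (x y : X) (g h : G) {l : ℕ} (xs zs : Fin (l + 1) → X) (a b : Fin l → G) : Prop :=
  xs 0 = x ∧ zs (Fin.last l) = y ∧
  g * (List.ofFn fun i : Fin l => (a i)⁻¹ * b i).prod = h ∧
  ∀ i : Fin l, ∃ (r s : Fin (k + 1) → G) (t u : Fin k → unitInterval),
    (∀ j, r j ∈ S) ∧ (∀ j, s j ∈ S) ∧
    a i = (List.ofFn r).reverse.prod ∧ b i = (List.ofFn s).reverse.prod ∧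
    gammaWord A r t (zs i.castSucc) = gammaWord A s u (xs i.succ)

/-- The extended metric `d_{S,k,Λ}` on `X × G`. -/
noncomputable def coherentDist [MetricSpace X] (A : HomotopyCoherentAction G X)
    (S : Set G) (k : ℕ) (Λ : ℝ) (p q : X × G) : ℝ≥0∞ :=
  ⨅ (l : ℕ) (xs : Fin (l + 1) → X) (zs : Fin (l + 1) → X) (a : Fin l → G) (b : Fin l → G)
    (_ : ChainCond A S k p.1 q.1 p.2 q.2 xs zs a b),
      (l : ℝ≥0∞) + ∑ i : Fin (l + 1), ENNReal.ofReal (Λ * dist (xs i) (zs i))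

/-!
Chains can be reversed (exchanging the roles of the `a_i` and `b_i`, and of the `x_i` and `z_i`),
which gives symmetry. Two chains can be concatenated by merging the last pair of the first with
the first pair of the second; since these meet at the same point of `X`, the triangle inequality
in `X` shows that the merged pair costs no more than the two pairs did, which gives the triangle
inequality. A chain of length `0` forces `g = h` and costs `Λ d(x, y)`, and every longer chain
costs at least `1`, which gives positivity off the diagonal.
-/

section Splice

variable {α : Type*} {m n : ℕ}

/- Gluing `u` and `v` so that the last index of `u` and the first index of `v` coincide (at `m`):
there `spliceLeft` keeps `u m`, while `spliceRight` keeps `v 0`. -/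
def spliceLeft (u : Fin (m + 1) → α) (v : Fin (n + 1) → α) (i : Fin (m + n + 1)) : α :=
  if h : (i : ℕ) ≤ m then u ⟨i, by omega⟩ else v ⟨i - m, by omega⟩

def spliceRight (u : Fin (m + 1) → α) (v : Fin (n + 1) → α) (i : Fin (m + n + 1)) : α :=
  if h : (i : ℕ) < m then u ⟨i, by omega⟩ else v ⟨i - m, by omega⟩

variable (u : Fin (m + 1) → α) (v : Fin (n + 1) → α)

@[simp] lemma spliceLeft_zero : spliceLeft u v 0 = u 0 := dif_pos m.zero_le

@[simp] lemma spliceLeft_castAdd (j : Fin m) :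
    spliceLeft u v (Fin.castAdd (n + 1) j) = u j.castSucc := dif_pos j.isLt.le

@[simp] lemma spliceLeft_succ_castAdd (j : Fin m) :
    spliceLeft u v (Fin.castAdd n j).succ = u j.succ := dif_pos j.isLt

@[simp] lemma spliceLeft_natAdd_zero :
    spliceLeft u v (Fin.natAdd m (0 : Fin (n + 1))) = u (Fin.last m) := dif_pos le_rfl

@[simp] lemma spliceLeft_natAdd_succ (j : Fin n) :
    spliceLeft u v (Fin.natAdd m j.succ) = v j.succ :=
  (dif_neg (by simp)).trans (congrArg v (Fin.ext (by simp)))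

@[simp] lemma spliceLeft_succ_natAdd (j : Fin n) :
    spliceLeft u v (Fin.natAdd m j).succ = v j.succ :=
  spliceLeft_natAdd_succ u v j

@[simp] lemma spliceRight_castSucc_castAdd (j : Fin m) :
    spliceRight u v (Fin.castAdd n j).castSucc = u j.castSucc := dif_pos j.isLt

@[simp] lemma spliceRight_castAdd (j : Fin m) :
    spliceRight u v (Fin.castAdd (n + 1) j) = u j.castSucc := dif_pos j.isLt

@[simp] lemma spliceRight_natAdd (j : Fin (n + 1)) :
    spliceRight u v (Fin.natAdd m j) = v j :=
  (dif_neg (by simp)).trans (congrArg v (Fin.ext (by simp)))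

@[simp] lemma spliceRight_last : spliceRight u v (Fin.last (m + n)) = v (Fin.last n) :=
  spliceRight_natAdd u v (Fin.last n)

lemma sum_splice_le {M : Type*} [AddCommMonoid M] [PartialOrder M] [IsOrderedAddMonoid M]
    {c : α → α → M} (hc : ∀ x y z, c x z ≤ c x y + c y z)
    (u₁ v₁ : Fin (m + 1) → α) (u₂ v₂ : Fin (n + 1) → α) (h : v₁ (Fin.last m) = u₂ 0) :
    ∑ i, c (spliceLeft u₁ u₂ i) (spliceRight v₁ v₂ i) ≤
      ∑ i, c (u₁ i) (v₁ i) + ∑ i, c (u₂ i) (v₂ i) :=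
  calc ∑ i, c (spliceLeft u₁ u₂ i) (spliceRight v₁ v₂ i)
      = ∑ j : Fin m, c (u₁ j.castSucc) (v₁ j.castSucc) +
          (c (u₁ (Fin.last m)) (v₂ 0) + ∑ j : Fin n, c (u₂ j.succ) (v₂ j.succ)) := by
        refine (Fin.sum_univ_add (a := m) (b := n + 1) _).trans ?_
        simp only [Fin.sum_univ_succ, spliceLeft_castAdd, spliceRight_castAdd,
          spliceLeft_natAdd_zero, spliceLeft_natAdd_succ, spliceRight_natAdd]
    _ ≤ ∑ j : Fin m, c (u₁ j.castSucc) (v₁ j.castSucc) +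
          (c (u₁ (Fin.last m)) (v₁ (Fin.last m)) + c (u₂ 0) (v₂ 0) +
            ∑ j : Fin n, c (u₂ j.succ) (v₂ j.succ)) := by
        gcongr
        exact h ▸ hc _ _ _
    _ = ∑ i, c (u₁ i) (v₁ i) + ∑ i, c (u₂ i) (v₂ i) := by
        rw [Fin.sum_univ_castSucc, Fin.sum_univ_succ (n := n)]
        abel

end Splice

lemma List.prod_ofFn_rev_inv {n : ℕ} (f : Fin n → G) :
    (List.ofFn fun i => (f i.rev)⁻¹).prod = (List.ofFn f).prod⁻¹ := by
  rw [List.prod_inv_reverse, List.ofFn_eq_map, List.ofFn_eq_map, List.map_map, ← List.map_reverse,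
    List.finRange_reverse, List.map_map]
  rfl

namespace ChainCond

variable [MetricSpace X] {A : HomotopyCoherentAction G X} {S : Set G} {k : ℕ} {x y z : X}
  {g h f : G}

lemma length_zero_iff {xs zs : Fin 1 → X} {a b : Fin 0 → G} :
    ChainCond A S k x y g h xs zs a b ↔ xs 0 = x ∧ zs 0 = y ∧ g = h := by
  simp [ChainCond]

lemma reverse {l : ℕ} {xs zs : Fin (l + 1) → X} {a b : Fin l → G}
    (hc : ChainCond A S k x y g h xs zs a b) :
    ChainCond A S k y x h g (fun j => zs j.rev) (fun j => xs j.rev)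
      (fun i => b i.rev) (fun i => a i.rev) := by
  obtain ⟨hx, hy, hprod, hsteps⟩ := hc
  refine ⟨by simpa using hy, by simpa using hx, ?_, fun i => ?_⟩
  · have hrev : (List.ofFn fun i => (b i.rev)⁻¹ * a i.rev).prod =
        (List.ofFn fun i => (a i)⁻¹ * b i).prod⁻¹ := by
      simp [← List.prod_ofFn_rev_inv]
    rw [hrev, ← hprod, mul_inv_cancel_right]
  · obtain ⟨r, s, t, u, hr, hs, ha, hb, hΓ⟩ := hsteps i.rev
    refine ⟨s, r, u, t, hs, hr, hb, ha, ?_⟩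
    simpa [Fin.rev_castSucc, Fin.rev_succ] using hΓ.symm

lemma splice {l₁ l₂ : ℕ} {xs₁ zs₁ : Fin (l₁ + 1) → X} {a₁ b₁ : Fin l₁ → G}
    {xs₂ zs₂ : Fin (l₂ + 1) → X} {a₂ b₂ : Fin l₂ → G}
    (hc₁ : ChainCond A S k x y g h xs₁ zs₁ a₁ b₁) (hc₂ : ChainCond A S k y z h f xs₂ zs₂ a₂ b₂) :
    ChainCond A S k x z g f (spliceLeft xs₁ xs₂) (spliceRight zs₁ zs₂)
      (Fin.append a₁ a₂) (Fin.append b₁ b₂) := by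
  obtain ⟨hx₁, -, hprod₁, hsteps₁⟩ := hc₁
  obtain ⟨-, hz₂, hprod₂, hsteps₂⟩ := hc₂
  refine ⟨by simpa using hx₁, by simpa using hz₂, ?_, fun i => ?_⟩
  · rw [List.ofFn_add, List.prod_append, ← mul_assoc]
    simpa [hprod₁] using hprod₂
  · refine Fin.addCases (fun j => ?_) (fun j => ?_) i
    · simpa using hsteps₁ j
    · simpa using hsteps₂ j

end ChainCond

section CoherentDist

variable [MetricSpace X] {A : HomotopyCoherentAction G X} {S : Set G} {k : ℕ} {Λ : ℝ}

noncomputable def chainCost (Λ : ℝ) {l : ℕ} (xs zs : Fin (l + 1) → X) : ℝ≥0∞ :=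
  ∑ i, ENNReal.ofReal (Λ * dist (xs i) (zs i))

lemma chainCost_reverse {l : ℕ} (xs zs : Fin (l + 1) → X) :
    chainCost Λ (fun j => zs j.rev) (fun j => xs j.rev) = chainCost Λ xs zs :=
  Fintype.sum_equiv Fin.revPerm _ _ fun i => by simp [dist_comm]

lemma ofReal_mul_dist_triangle (hΛ : 0 ≤ Λ) (x y z : X) :
    ENNReal.ofReal (Λ * dist x z) ≤
      ENNReal.ofReal (Λ * dist x y) + ENNReal.ofReal (Λ * dist y z) :=
  calc ENNReal.ofReal (Λ * dist x z) ≤ ENNReal.ofReal (Λ * dist x y + Λ * dist y z) := by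
        rw [← mul_add]
        gcongr
        exact dist_triangle x y z
    _ ≤ _ := ENNReal.ofReal_add_le

lemma chainCost_splice_le (hΛ : 0 ≤ Λ) {l₁ l₂ : ℕ} {xs₁ zs₁ : Fin (l₁ + 1) → X}
    {xs₂ zs₂ : Fin (l₂ + 1) → X} (h : zs₁ (Fin.last l₁) = xs₂ 0) :
    chainCost Λ (spliceLeft xs₁ xs₂) (spliceRight zs₁ zs₂) ≤
      chainCost Λ xs₁ zs₁ + chainCost Λ xs₂ zs₂ :=
  sum_splice_le (ofReal_mul_dist_triangle hΛ) xs₁ zs₁ xs₂ zs₂ h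

lemma coherentDist_le {p q : X × G} {l : ℕ} {xs zs : Fin (l + 1) → X} {a b : Fin l → G}
    (hc : ChainCond A S k p.1 q.1 p.2 q.2 xs zs a b) :
    coherentDist A S k Λ p q ≤ l + chainCost Λ xs zs :=
  iInf_le_of_le l <| iInf_le_of_le xs <| iInf_le_of_le zs <| iInf_le_of_le a <|
    iInf_le_of_le b <| iInf_le_of_le hc le_rfl

lemma le_coherentDist {p q : X × G} {c : ℝ≥0∞}
    (h : ∀ (l : ℕ) (xs zs : Fin (l + 1) → X) (a b : Fin l → G),
      ChainCond A S k p.1 q.1 p.2 q.2 xs zs a b → c ≤ l + chainCost Λ xs zs) :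
    c ≤ coherentDist A S k Λ p q := by
  simp only [coherentDist, le_iInf_iff]
  exact h

lemma le_coherentDist_add {p q r : X × G} {c : ℝ≥0∞}
    (h : ∀ (l₁ : ℕ) (xs₁ zs₁ : Fin (l₁ + 1) → X) (a₁ b₁ : Fin l₁ → G)
      (l₂ : ℕ) (xs₂ zs₂ : Fin (l₂ + 1) → X) (a₂ b₂ : Fin l₂ → G),
      ChainCond A S k p.1 q.1 p.2 q.2 xs₁ zs₁ a₁ b₁ →
      ChainCond A S k q.1 r.1 q.2 r.2 xs₂ zs₂ a₂ b₂ →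
      c ≤ l₁ + chainCost Λ xs₁ zs₁ + (l₂ + chainCost Λ xs₂ zs₂)) :
    c ≤ coherentDist A S k Λ p q + coherentDist A S k Λ q r := by
  simp only [coherentDist, ENNReal.iInf_add, ENNReal.add_iInf, le_iInf_iff]
  intro l₂ xs₂ zs₂ a₂ b₂ hc₂ l₁ xs₁ zs₁ a₁ b₁ hc₁
  exact h l₁ xs₁ zs₁ a₁ b₁ l₂ xs₂ zs₂ a₂ b₂ hc₁ hc₂

lemma coherentDist_le_swap (p q : X × G) :
    coherentDist A S k Λ q p ≤ coherentDist A S k Λ p q :=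
  le_coherentDist fun _ xs zs _ _ hc =>
    (coherentDist_le hc.reverse).trans_eq (by rw [chainCost_reverse])

lemma coherentDist_comm (p q : X × G) :
    coherentDist A S k Λ p q = coherentDist A S k Λ q p :=
  (coherentDist_le_swap q p).antisymm (coherentDist_le_swap p q)

lemma coherentDist_triangle (hΛ : 0 ≤ Λ) (p q r : X × G) :
    coherentDist A S k Λ p r ≤ coherentDist A S k Λ p q + coherentDist A S k Λ q r := by
  refine le_coherentDist_add fun l₁ xs₁ zs₁ a₁ b₁ l₂ xs₂ zs₂ a₂ b₂ hc₁ hc₂ => ?_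
  calc coherentDist A S k Λ p r
      ≤ ((l₁ + l₂ : ℕ) : ℝ≥0∞) + chainCost Λ (spliceLeft xs₁ xs₂) (spliceRight zs₁ zs₂) :=
        coherentDist_le (hc₁.splice hc₂)
    _ ≤ ((l₁ + l₂ : ℕ) : ℝ≥0∞) + (chainCost Λ xs₁ zs₁ + chainCost Λ xs₂ zs₂) := by
        gcongr
        exact chainCost_splice_le hΛ (hc₁.2.1.trans hc₂.1.symm)
    _ = l₁ + chainCost Λ xs₁ zs₁ + (l₂ + chainCost Λ xs₂ zs₂) := by
        push_cast
        ring

lemma coherentDist_self (p : X × G) : coherentDist A S k Λ p p = 0 := by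
  have hc : ChainCond A S k p.1 p.1 p.2 p.2 (fun _ => p.1) (fun _ => p.1) Fin.elim0 Fin.elim0 :=
    ChainCond.length_zero_iff.2 ⟨rfl, rfl, rfl⟩
  exact nonpos_iff_eq_zero.1 ((coherentDist_le hc).trans_eq (by simp [chainCost]))

lemma one_le_coherentDist_of_snd_ne {p q : X × G} (h : p.2 ≠ q.2) :
    1 ≤ coherentDist A S k Λ p q := by
  refine le_coherentDist fun l xs zs a b hc => ?_
  cases l with
  | zero => exact absurd (ChainCond.length_zero_iff.1 hc).2.2 h
  | succ l => exact le_add_right (by simp)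

lemma min_one_ofReal_le_coherentDist (p q : X × G) :
    min 1 (ENNReal.ofReal (Λ * dist p.1 q.1)) ≤ coherentDist A S k Λ p q := by
  refine le_coherentDist fun l xs zs a b hc => ?_
  cases l with
  | zero =>
    obtain ⟨hx, hz, -⟩ := ChainCond.length_zero_iff.1 hc
    simp [chainCost, hx, hz]
  | succ l => exact min_le_of_left_le (le_add_right (by simp))

lemma coherentDist_pos (hΛ : 0 < Λ) {p q : X × G} (hpq : p ≠ q) :
    0 < coherentDist A S k Λ p q := by
  by_cases hx : p.1 = q.1
  · exact zero_lt_one.trans_le (one_le_coherentDist_of_snd_ne fun hg => hpq (Prod.ext hx hg))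
  · refine lt_of_lt_of_le ?_ (min_one_ofReal_le_coherentDist p q)
    simpa using mul_pos hΛ (dist_pos.2 hx)

end CoherentDist

theorem coherentDist_isExtendedMetric_general {G : Type*} [Group G] {X : Type*} [MetricSpace X]
    (A : HomotopyCoherentAction G X) (S : Set G)
    (k : ℕ) (Λ : ℝ) (hΛ : 0 < Λ) :
    (∀ p q : X × G, coherentDist A S k Λ p q = coherentDist A S k Λ q p) ∧
    (∀ p q r : X × G,
      coherentDist A S k Λ p r ≤ coherentDist A S k Λ p q + coherentDist A S k Λ q r) ∧
    (∀ p : X × G, coherentDist A S k Λ p p = 0) ∧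
    (∀ p q : X × G, p ≠ q → 0 < coherentDist A S k Λ p q) :=
  ⟨coherentDist_comm, coherentDist_triangle hΛ.le, coherentDist_self,
    fun _ _ => coherentDist_pos hΛ⟩

/-- The function `d_{S,k,Λ}` is an extended metric on `X × G`: it is symmetric, satisfies
the triangle inequality, vanishes on the diagonal, and is positive off the diagonal. -/
theorem coherentDist_isExtendedMetric {G : Type*} [Group G] {X : Type*} [MetricSpace X]
    (A : HomotopyCoherentAction G X) (S : Set G) (hSfin : S.Finite) (hS1 : (1 : G) ∈ S)
    (k : ℕ) (Λ : ℝ) (hΛ : 0 < Λ) :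
    (∀ p q : X × G, coherentDist A S k Λ p q = coherentDist A S k Λ q p) ∧
    (∀ p q r : X × G,
      coherentDist A S k Λ p r ≤ coherentDist A S k Λ p q + coherentDist A S k Λ q r) ∧
    (∀ p : X × G, coherentDist A S k Λ p p = 0) ∧
    (∀ p q : X × G, p ≠ q → 0 < coherentDist A S k Λ p q) :=
  coherentDist_isExtendedMetric_general A S k Λ hΛ
end

section
/- One has d_{S,k,Λ}((x,g),(y,h)) < 1 if and only if g = h and Λ·d_X(x,y) < 1, and in this case d_{S,k,Λ}((x,g),(y,h)) = Λ·d_X(x,y). Consequently, the topology induced by d_{S,k,Λ} on X × G is the product topology of the d_X-topology on X and the discrete topology on G. -/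
open scoped ENNReal

variable {G : Type*} [Group G] {X : Type*}

/-! A chain with `l ≥ 1` steps already costs at least `l ≥ 1`, so the only chains of cost `< 1`
are the one-point chains `l = 0`; these force `g = h` and cost exactly `Λ · d_X(x, y)`. Hence the
balls of radius `ε ≤ 1` are the sets `B(x, ε/Λ) × {g}`, which form a basis of the product
topology with the discrete topology on `G`. -/

open Filter Topology

section

variable [MetricSpace X] (A : HomotopyCoherentAction G X) (S : Set G) (k : ℕ) (Λ : ℝ)

theorem coherentDist_le_ofReal_dist (x y : X) (g : G) :
    coherentDist A S k Λ (x, g) (y, g) ≤ ENNReal.ofReal (Λ * dist x y) := by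
  have hchain : ChainCond A S k x y g g (fun _ : Fin 1 => x) (fun _ : Fin 1 => y)
      Fin.elim0 Fin.elim0 := ⟨rfl, rfl, by simp, fun i => i.elim0⟩
  calc coherentDist A S k Λ (x, g) (y, g)
      ≤ ((0 : ℕ) : ℝ≥0∞) + ∑ _ : Fin 1, ENNReal.ofReal (Λ * dist x y) :=
        iInf_le_of_le 0 <| iInf_le_of_le _ <| iInf_le_of_le _ <| iInf_le_of_le Fin.elim0 <|
          iInf_le_of_le Fin.elim0 <| iInf_le _ hchain
    _ = ENNReal.ofReal (Λ * dist x y) := by simp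

theorem coherentDist_lt_iff {c : ℝ≥0∞} (hc : c ≤ 1) (x y : X) (g h : G) :
    coherentDist A S k Λ (x, g) (y, h) < c ↔ g = h ∧ ENNReal.ofReal (Λ * dist x y) < c := by
  refine ⟨fun hd => ?_, fun ⟨hgh, hlt⟩ =>
    hgh ▸ (coherentDist_le_ofReal_dist A S k Λ x y g).trans_lt hlt⟩
  simp only [coherentDist, iInf_lt_iff] at hd
  obtain ⟨l, xs, zs, a, b, ⟨hx, hy, hgh, -⟩, hcost⟩ := hd
  cases l with
  | zero =>
    simp only [Fin.last_zero] at hy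
    exact ⟨by simpa using hgh, by simpa [hx, hy] using hcost⟩
  | succ l =>
    refine absurd (hcost.trans_le hc) (not_lt.2 ?_)
    calc (1 : ℝ≥0∞) ≤ ((l + 1 : ℕ) : ℝ≥0∞) := by exact_mod_cast l.succ_pos
      _ ≤ _ := le_self_add

theorem coherentDist_eq_of_lt_one {x y : X} {g h : G}
    (hd : coherentDist A S k Λ (x, g) (y, h) < 1) :
    coherentDist A S k Λ (x, g) (y, h) = ENNReal.ofReal (Λ * dist x y) := by
  obtain ⟨rfl, hlt⟩ := (coherentDist_lt_iff A S k Λ le_rfl x y g h).1 hd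
  refine le_antisymm (coherentDist_le_ofReal_dist A S k Λ x y g) (not_lt.1 fun hd' => ?_)
  exact (((coherentDist_lt_iff A S k Λ hlt.le x y g g).1 hd').2).false

theorem setOf_coherentDist_lt_ofReal (hΛ : 0 < Λ) {ε : ℝ} (hε : ε ≤ 1) (p : X × G) :
    {q | coherentDist A S k Λ p q < ENNReal.ofReal ε} = Metric.ball p.1 (ε / Λ) ×ˢ {p.2} := by
  ext ⟨y, h⟩
  rw [Set.mem_ofPred_eq, coherentDist_lt_iff A S k Λ (ENNReal.ofReal_le_one.2 hε),
    ENNReal.ofReal_lt_ofReal_iff_of_nonneg (by positivity), ← lt_div_iff₀' hΛ]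
  simp [dist_comm, eq_comm, and_comm]

theorem nhds_hasBasis_coherentDist [TopologicalSpace G] [DiscreteTopology G] (hΛ : 0 < Λ)
    (p : X × G) :
    (𝓝 p).HasBasis (fun ε : ℝ => 0 < ε)
      fun ε => {q | coherentDist A S k Λ p q < ENNReal.ofReal ε} := by
  have hprod : (𝓝 p).HasBasis (fun δ : ℝ => 0 < δ) (Metric.ball p.1 · ×ˢ {p.2}) := by
    rw [nhds_prod_eq, nhds_discrete G, ← principal_singleton]
    exact Metric.nhds_basis_ball.prod_principal _
  refine hprod.to_hasBasis (fun δ hδ => ⟨min (Λ * δ) 1, by positivity, ?_⟩) fun ε hε =>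
    ⟨min ε 1 / Λ, by positivity, ?_⟩
  · rw [setOf_coherentDist_lt_ofReal A S k Λ hΛ (min_le_right _ _)]
    refine Set.prod_mono (Metric.ball_subset_ball ?_) le_rfl
    rw [div_le_iff₀' hΛ]
    exact min_le_left _ _
  · rw [← setOf_coherentDist_lt_ofReal A S k Λ hΛ (min_le_right _ _)]
    exact fun q hq => hq.trans_le (ENNReal.ofReal_le_ofReal (min_le_left _ _))

end

theorem coherentDist_lt_one_general {G : Type*} [Group G] {X : Type*} [MetricSpace X]
    (A : HomotopyCoherentAction G X) (S : Set G)
    (k : ℕ) (Λ : ℝ) (hΛ : 0 < Λ) :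
    (∀ (x y : X) (g h : G),
      coherentDist A S k Λ (x, g) (y, h) < 1 ↔ g = h ∧ Λ * dist x y < 1) ∧
    (∀ (x y : X) (g h : G), coherentDist A S k Λ (x, g) (y, h) < 1 →
      coherentDist A S k Λ (x, g) (y, h) = ENNReal.ofReal (Λ * dist x y)) ∧
    (∀ U : Set (X × G),
      (∀ p ∈ U, ∃ ε : ℝ, 0 < ε ∧
        {q : X × G | coherentDist A S k Λ p q < ENNReal.ofReal ε} ⊆ U) ↔
      @IsOpen (X × G) (@instTopologicalSpaceProd X G _ ⊥) U) := by
  refine ⟨fun x y g h => ?_, fun x y g h => coherentDist_eq_of_lt_one A S k Λ, fun U => ?_⟩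
  · rw [coherentDist_lt_iff A S k Λ le_rfl, ENNReal.ofReal_lt_one]
  · let : TopologicalSpace G := ⊥
    have : DiscreteTopology G := ⟨rfl⟩
    simp only [isOpen_iff_mem_nhds, (nhds_hasBasis_coherentDist A S k Λ hΛ _).mem_iff]

/-- `d_{S,k,Λ}((x,g),(y,h)) < 1` iff `g = h` and `Λ · d_X(x,y) < 1`, in which case it
equals `Λ · d_X(x,y)`; consequently the topology induced by `d_{S,k,Λ}` on `X × G` is
the product of the metric topology on `X` with the discrete topology on `G`. -/
theorem coherentDist_lt_one {G : Type*} [Group G] {X : Type*} [MetricSpace X]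
    (A : HomotopyCoherentAction G X) (S : Set G) (hSfin : S.Finite) (hS1 : (1 : G) ∈ S)
    (k : ℕ) (Λ : ℝ) (hΛ : 0 < Λ) :
    (∀ (x y : X) (g h : G),
      coherentDist A S k Λ (x, g) (y, h) < 1 ↔ g = h ∧ Λ * dist x y < 1) ∧
    (∀ (x y : X) (g h : G), coherentDist A S k Λ (x, g) (y, h) < 1 →
      coherentDist A S k Λ (x, g) (y, h) = ENNReal.ofReal (Λ * dist x y)) ∧
    (∀ U : Set (X × G),
      (∀ p ∈ U, ∃ ε : ℝ, 0 < ε ∧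
        {q : X × G | coherentDist A S k Λ p q < ENNReal.ofReal ε} ⊆ U) ↔
      @IsOpen (X × G) (@instTopologicalSpaceProd X G _ ⊥) U) :=
  coherentDist_lt_one_general A S k Λ hΛ
end

section
/- For groups G, F_1, F_2 with F_1 and F_2 finite, there is an injective group homomorphism (G ≀ F_1) ≀ F_2 → G ≀ (F_1 ≀ F_2). -/
/-- The automorphism of `F → G` given by precomposition with left translation by `f⁻¹`. -/
def wreathPermAut (G F : Type*) [Group G] [Group F] (f : F) : MulAut (F → G) where
  toFun v := fun x => v (f⁻¹ * x)
  invFun v := fun x => v (f * x)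
  left_inv v := by funext x; simp
  right_inv v := by funext x; simp
  map_mul' v w := rfl

/-- The action of `F` on `∏_F G` permuting the factors by left translation. -/
def wreathAct (G F : Type*) [Group G] [Group F] : F →* MulAut (F → G) where
  toFun := wreathPermAut G F
  map_one' := by
    apply MulEquiv.ext; intro v; funext x; simp [wreathPermAut]
  map_mul' f g := by
    apply MulEquiv.ext; intro v; funext x
    simp [wreathPermAut, MulAut.mul_def, mul_assoc]

/-- The wreath product `G ≀ F = (∏_F G) ⋊ F`. -/
abbrev Wreath (G F : Type*) [Group G] [Group F] :=
  (F → G) ⋊[wreathAct G F] F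

@[simp]
theorem wreathAct_apply (G F : Type*) [Group G] [Group F] (f : F) (v : F → G) (x : F) :
    wreathAct G F f v x = v (f⁻¹ * x) :=
  rfl

@[simp]
theorem wreathAct_symm_apply (G F : Type*) [Group G] [Group F] (f : F) (v : F → G) (x : F) :
    (wreathAct G F f).symm v x = v (f * x) :=
  rfl

namespace Wreath

variable {G F₁ F₂ : Type*} [Group G] [Group F₁] [Group F₂]

/-- `(v, f)` with `v b = (w b, s b)` goes to `(u, (s, f))`, where the coordinate of `u` at
`(t, b) : F₁ ≀ F₂` is the `t b`-coordinate of `w b`. -/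
def reassoc (x : Wreath (Wreath G F₁) F₂) : Wreath G (Wreath F₁ F₂) :=
  ⟨fun p => (x.left p.right).left (p.left p.right), ⟨fun b => (x.left b).right, x.right⟩⟩

theorem reassoc_mul (a b : Wreath (Wreath G F₁) F₂) :
    reassoc (a * b) = reassoc a * reassoc b := by
  ext p
  · simp [reassoc, mul_assoc]
  · rfl
  · rfl

theorem reassoc_injective : Function.Injective (reassoc : Wreath (Wreath G F₁) F₂ → _) := by
  intro x y h
  ext b c
  · exact congrFun (congrArg SemidirectProduct.left h) ⟨fun _ => c, b⟩
  · exact congrFun (congrArg (fun z => z.right.left) h) b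
  · exact congrArg (fun z => z.right.right) h

def reassocHom : Wreath (Wreath G F₁) F₂ →* Wreath G (Wreath F₁ F₂) :=
  MonoidHom.mk' reassoc reassoc_mul

end Wreath

theorem wreath_wreath_embeds_general (G F₁ F₂ : Type*) [Group G] [Group F₁] [Group F₂] :
    ∃ f : Wreath (Wreath G F₁) F₂ →* Wreath G (Wreath F₁ F₂), Function.Injective f :=
  ⟨Wreath.reassocHom, Wreath.reassoc_injective⟩

/-- For finite `F₁`, `F₂` there is an injective group homomorphism
`(G ≀ F₁) ≀ F₂ → G ≀ (F₁ ≀ F₂)`. -/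
theorem wreath_wreath_embeds (G F₁ F₂ : Type*) [Group G] [Group F₁] [Group F₂]
    [Finite F₁] [Finite F₂] :
    ∃ f : Wreath (Wreath G F₁) F₂ →* Wreath G (Wreath F₁ F₂), Function.Injective f :=
  wreath_wreath_embeds_general G F₁ F₂
end

section
/- Let H be a subgroup of finite index in a group G. Then there exists an injective group homomorphism from G into the wreath product (∏_{G/H} H) ⋊ Perm(G/H), where Perm(G/H) is the group of permutations of the finite coset space G/H acting by permuting the factors of the product. -/
/-- The action of the permutation group of a set `T` on `∏_T H` permuting the factors. -/
def permCoordAct (H : Type*) [Group H] (T : Type*) : Equiv.Perm T →* MulAut (T → H) where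
  toFun σ :=
    { toFun := fun v t => v (σ⁻¹ t)
      invFun := fun v t => v (σ t)
      left_inv := fun v => by funext t; simp
      right_inv := fun v => by funext t; simp
      map_mul' := fun v w => rfl }
  map_one' := by apply MulEquiv.ext; intro v; funext t; simp
  map_mul' σ τ := by
    apply MulEquiv.ext; intro v; funext t
    simp [MulAut.mul_def, Equiv.Perm.mul_def, Equiv.Perm.inv_def]

/-!
The Kaloujnine–Krasner embedding. Choose a representative `t.out` of every coset `t ∈ G ⧸ H`.
For `g : G` the elements `t.out⁻¹ * g * (g⁻¹ • t).out` lie in `H`; together with the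
permutation of `G ⧸ H` induced by `g` they form an element of the wreath product, and the
cocycle identity for these coordinates makes `g` ↦ this element a homomorphism. It is injective
because if `g` acts trivially on `G ⧸ H`, its coordinate at a coset `t` is the conjugate
`t.out⁻¹ * g * t.out`, which is `1` only for `g = 1`.
-/

namespace Subgroup

variable {G : Type*} [Group G] (H : Subgroup G)

theorem out_inv_mul_mul_out_smul_mem (g : G) (t : G ⧸ H) :
    t.out⁻¹ * (g * (g⁻¹ • t).out) ∈ H := by
  rw [← QuotientGroup.eq, QuotientGroup.out_eq', ← smul_eq_mul, ← MulAction.Quotient.smul_mk,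
    QuotientGroup.out_eq', smul_inv_smul]

noncomputable def wreathCoord (g : G) : G ⧸ H → H :=
  fun t => ⟨t.out⁻¹ * (g * (g⁻¹ • t).out), H.out_inv_mul_mul_out_smul_mem g t⟩

theorem wreathCoord_mul (g k : G) :
    H.wreathCoord (g * k) =
      H.wreathCoord g * permCoordAct H (G ⧸ H) (MulAction.toPermHom G (G ⧸ H) g)
        (H.wreathCoord k) := by
  funext t
  ext
  change t.out⁻¹ * (g * k * ((g * k)⁻¹ • t).out) =
    t.out⁻¹ * (g * (g⁻¹ • t).out) * ((g⁻¹ • t).out⁻¹ * (k * (k⁻¹ • g⁻¹ • t).out))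
  rw [mul_inv_rev, mul_smul]
  group

noncomputable def toWreath : G →* ((G ⧸ H) → H) ⋊[permCoordAct H (G ⧸ H)] Equiv.Perm (G ⧸ H) :=
  MonoidHom.mk' (fun g => ⟨H.wreathCoord g, MulAction.toPermHom G (G ⧸ H) g⟩) fun g k =>
    SemidirectProduct.ext (H.wreathCoord_mul g k) (map_mul _ g k)

theorem toWreath_injective : Function.Injective H.toWreath := by
  rw [injective_iff_map_eq_one]
  intro g hg
  set e : G ⧸ H := QuotientGroup.mk 1
  have hperm : MulAction.toPermHom G (G ⧸ H) g = 1 := congrArg SemidirectProduct.right hg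
  have hfix : g⁻¹ • e = e := by
    simpa using congrArg (fun p : Equiv.Perm (G ⧸ H) => p⁻¹ e) hperm
  have hcoord : e.out⁻¹ * (g * (g⁻¹ • e).out) = 1 :=
    congrArg Subtype.val (congrFun (congrArg SemidirectProduct.left hg) e)
  rwa [hfix, inv_mul_eq_one, right_eq_mul] at hcoord

end Subgroup

theorem embeds_in_wreath_of_finiteIndex_general (G : Type*) [Group G] (H : Subgroup G) :
    ∃ f : G →* ((G ⧸ H) → H) ⋊[permCoordAct H (G ⧸ H)] Equiv.Perm (G ⧸ H),
      Function.Injective f :=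
  ⟨H.toWreath, H.toWreath_injective⟩

/-- A subgroup `H` of finite index in `G` gives an injective group homomorphism from `G`
into the permutation wreath product `(∏_{G/H} H) ⋊ Perm(G/H)`. -/
theorem embeds_in_wreath_of_finiteIndex (G : Type*) [Group G] (H : Subgroup G)
    [H.FiniteIndex] :
    ∃ f : G →* ((G ⧸ H) → H) ⋊[permCoordAct H (G ⧸ H)] Equiv.Perm (G ⧸ H),
      Function.Injective f :=
  embeds_in_wreath_of_finiteIndex_general G H
end

section
/- The map sending (γ_{k+1}, t_k, γ_k, …, t_1, γ_1, x) to Γ(γ_{k+1}, t_k, γ_k, …, t_1, γ_1, x) ∈ X respects the equivalence relation ∼ defining MΓ; hence it descends to a well-defined retraction R : MΓ → X satisfying R([e,x]) = x. -/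
open scoped ENNReal

variable {G : Type*} [Group G] {X : Type*}

/-- Convert a point `(γ_{k+1}, [(t_k,γ_k),…,(t_1,γ_1)], x)` of `⨿_k G^{k+1} × [0,1]^k × X`
into the argument format of `Γ`: the list of pairs `[(γ_{k+1},t_k),…,(γ_2,t_1)]` and the
base element `γ_1`. -/
def shiftList {G : Type*} : G → List (unitInterval × G) → List (G × unitInterval) × G
  | γ, [] => ([], γ)
  | γ, (t, γ') :: L => ((γ, t) :: (shiftList γ' L).1, (shiftList γ' L).2)

/-- Evaluation `(γ_{k+1},t_k,γ_k,…,t_1,γ_1,x) ↦ Γ(γ_{k+1},t_k,γ_k,…,t_1,γ_1,x)` on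
representatives of `MΓ`. -/
def Rval {G : Type*} [Group G] {X : Type*} [TopologicalSpace X]
    (A : HomotopyCoherentAction G X) (p : G × List (unitInterval × G) × X) : X :=
  A.Γ (shiftList p.1 p.2.1).1 (shiftList p.1 p.2.1).2 p.2.2

/-- The equivalence relation generating the quotient `MΓ`; a point
`(γ_{k+1},t_k,γ_k,…,t_1,γ_1,x)` is represented as `(γ_{k+1}, [(t_k,γ_k),…,(t_1,γ_1)], x)`. -/
inductive MRel {G : Type*} [Group G] {X : Type*} [TopologicalSpace X]
    (A : HomotopyCoherentAction G X) :
    G × List (unitInterval × G) × X → G × List (unitInterval × G) × X → Prop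
  | base_unit (γ : G) (L : List (unitInterval × G)) (t : unitInterval) (x : X) :
      MRel A (γ, L ++ [(t, (1 : G))], x) (γ, L, x)
  | unit_mid (γ : G) (L₁ L₂ : List (unitInterval × G)) (t t' : unitInterval) (γ' : G) (x : X) :
      MRel A (γ, L₁ ++ (t, (1 : G)) :: (t', γ') :: L₂, x) (γ, L₁ ++ (t * t', γ') :: L₂, x)
  | param_one_mid (γ : G) (L₁ L₂ : List (unitInterval × G)) (t' : unitInterval)
      (γ' γᵢ : G) (x : X) :
      MRel A (γ, L₁ ++ (t', γ') :: ((1 : unitInterval), γᵢ) :: L₂, x)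
        (γ, L₁ ++ (t', γ' * γᵢ) :: L₂, x)
  | param_one_head (γ γ' : G) (L : List (unitInterval × G)) (x : X) :
      MRel A (γ, ((1 : unitInterval), γ') :: L, x) (γ * γ', L, x)
  | param_zero (γ γᵢ : G) (L₁ L₂ : List (unitInterval × G)) (x : X) :
      MRel A (γ, L₁ ++ ((0 : unitInterval), γᵢ) :: L₂, x) (γ, L₁, Rval A (γᵢ, L₂, x))

lemma shiftList_append {α : Type*} (a : α) (L₁ L₂ : List (unitInterval × α)) :
    shiftList a (L₁ ++ L₂) =
      ((shiftList a L₁).1 ++ (shiftList (shiftList a L₁).2 L₂).1,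
        (shiftList (shiftList a L₁).2 L₂).2) := by
  induction L₁ generalizing a with
  | nil => rfl
  | cons p L ih => simp [shiftList, ih p.2]

namespace HomotopyCoherentAction

variable [TopologicalSpace X] (A : HomotopyCoherentAction G X)

/-- A parameter `1` multiplies the two group elements around it, whether the right one is the
base element (`mul_last`) or not (`mul_mid`). -/
lemma Γ_append_one_shiftList (P : List (G × unitInterval)) (γ γ' : G)
    (L : List (unitInterval × G)) (x : X) :
    A.Γ (P ++ (γ, 1) :: (shiftList γ' L).1) (shiftList γ' L).2 x =
      A.Γ (P ++ (shiftList (γ * γ') L).1) (shiftList (γ * γ') L).2 x := by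
  cases L with
  | nil => simpa [shiftList] using A.mul_last P γ γ' x
  | cons p L => exact A.mul_mid P _ γ γ' p.1 _ x

end HomotopyCoherentAction

theorem MRel.Rval_eq [TopologicalSpace X] {A : HomotopyCoherentAction G X}
    {p q : G × List (unitInterval × G) × X} (h : MRel A p q) : Rval A p = Rval A q := by
  cases h with
  | base_unit γ L t x =>
    simpa [Rval, shiftList_append, shiftList] using A.base_one _ _ t x
  | unit_mid γ L₁ L₂ t t' γ' x =>
    simpa [Rval, shiftList_append, shiftList] using A.unit_mid _ _ _ t t' _ x
  | param_one_mid γ L₁ L₂ t' γ' γᵢ x =>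
    simpa [Rval, shiftList_append, shiftList] using
      A.Γ_append_one_shiftList ((shiftList γ L₁).1 ++ [((shiftList γ L₁).2, t')]) γ' γᵢ L₂ x
  | param_one_head γ γ' L x => exact A.Γ_append_one_shiftList [] γ γ' L x
  | param_zero γ γᵢ L₁ L₂ x =>
    simpa [Rval, shiftList_append, shiftList] using A.split _ _ _ _ x

/-- The map `(γ_{k+1},t_k,…,γ_1,x) ↦ Γ(γ_{k+1},t_k,…,γ_1,x)` respects the equivalence
relation defining `MΓ`, and hence descends to a well-defined retraction `R : MΓ → X`
satisfying `R([e,x]) = x`. -/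
theorem Rval_descends {G : Type*} [Group G] {X : Type*} [TopologicalSpace X]
    (A : HomotopyCoherentAction G X) :
    (∀ p q : G × List (unitInterval × G) × X, MRel A p q → Rval A p = Rval A q) ∧
    ∃ R : Quot (MRel A) → X,
      (∀ p, R (Quot.mk (MRel A) p) = Rval A p) ∧
      ∀ x : X, R (Quot.mk (MRel A) (1, [], x)) = x :=
  ⟨fun _ _ => MRel.Rval_eq, Quot.lift (Rval A) fun _ _ => MRel.Rval_eq, fun _ => rfl,
    A.unit_nil⟩
end

section
/- Let n ∈ ℕ, Λ > 0, and let α ≤ n. Let b < n, let γ_1, …, γ_b ∈ S^α and h ∈ S^α, and let t_1, …, t_b ∈ [0,1], x ∈ X. Then for every g ∈ G: d_{S^n,n,Λ}( (Γ(h,t_b,γ_b,…,γ_1,x), g), (Γ(e,t_b,γ_b,…,γ_1,x), gh) ) ≤ 2. -/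
open scoped ENNReal

variable {G : Type*} [Group G] {X : Type*}

open scoped Pointwise

/-!
Both points are reached from the common point `x`: `P = Γ(h,t_b,γ_b,…,γ_1,x)` by the word
`(h, γ_b, …, γ_1)` and `Q = Γ(e,t_b,γ_b,…,γ_1,x)` by `(e, γ_b, …, γ_1)`, each padded with trivial
letters to length `n + 1`. Since trivial words act trivially, this gives a chain of length two
`(P, g) → (x, ghW) → (Q, gh)`, with `W = γ_b⋯γ_1`, whose distance terms all vanish.
-/

section Padding

variable {M : Type*} [One M]

def padOne {m n : ℕ} (w : Fin m → M) : Fin n → M :=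
  fun j => if hj : (j : ℕ) < m then w ⟨j, hj⟩ else 1

theorem ofFn_padOne {m n : ℕ} (hmn : m ≤ n) (w : Fin m → M) :
    List.ofFn (padOne w : Fin n → M) = List.ofFn w ++ List.replicate (n - m) 1 := by
  refine List.ext_getElem (by simp; omega) fun i hi _ => ?_
  simp only [List.length_ofFn] at hi
  by_cases him : i < m
  · simp [padOne, him, List.getElem_append_left]
  · rw [List.getElem_append_right (by simpa using not_lt.mp him)]
    simp [padOne, him]

theorem padOne_mem {m n : ℕ} {S : Set M} (hS1 : (1 : M) ∈ S) {w : Fin m → M}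
    (hw : ∀ i, w i ∈ S) (j : Fin n) : padOne w j ∈ S := by
  unfold padOne
  split_ifs
  exacts [hw _, hS1]

end Padding

theorem prod_reverse_ofFn_padOne {G : Type*} [Monoid G] {m n : ℕ} (hmn : m ≤ n)
    (w : Fin m → G) :
    (List.ofFn (padOne w : Fin n → G)).reverse.prod = (List.ofFn w).reverse.prod := by
  simp [ofFn_padOne hmn]

theorem prod_reverse_ofFn_snoc {G : Type*} [Monoid G] {b : ℕ} (γ : Fin b → G) (c : G) :
    (List.ofFn (Fin.snoc γ c : Fin (b + 1) → G)).reverse.prod =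
      c * (List.ofFn γ).reverse.prod := by
  rw [List.ofFn_succ', List.concat_eq_append, List.reverse_append]
  simp

section Action

variable [TopologicalSpace X] (A : HomotopyCoherentAction G X)

theorem HomotopyCoherentAction.Γ_append_of_fst_eq_one {L₁ : List (G × unitInterval)}
    (hL₁ : ∀ p ∈ L₁, p.1 = 1) (L₂ : List (G × unitInterval)) (γ₀ : G) (z : X) :
    A.Γ (L₁ ++ L₂) γ₀ z = A.Γ L₂ γ₀ z := by
  induction L₁ with
  | nil => rfl
  | cons p L ih =>
    obtain ⟨γ, s⟩ := p
    obtain rfl : γ = 1 := hL₁ _ List.mem_cons_self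
    rw [List.cons_append, A.unit_head]
    exact ih fun q hq => hL₁ q (List.mem_cons_of_mem _ hq)

theorem gammaWord_one {k : ℕ} (u : Fin k → unitInterval) (z : X) :
    gammaWord A (1 : Fin (k + 1) → G) u z = z := by
  have hL : ∀ p ∈ (List.ofFn fun j : Fin k => ((1 : Fin (k + 1) → G) j.succ, u j)).reverse,
      p.1 = 1 := by
    simp
  rw [gammaWord, ← List.append_nil (List.reverse _), A.Γ_append_of_fst_eq_one hL]
  exact A.unit_nil z

theorem gammaWord_padOne {b n : ℕ} (hbn : b ≤ n) (w : Fin (b + 1) → G)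
    (t : Fin b → unitInterval) (z : X) :
    gammaWord A (padOne w : Fin (n + 1) → G) (padOne t) z = gammaWord A w t z := by
  have hletters : (fun j : Fin n => ((padOne w : Fin (n + 1) → G) j.succ, padOne t j)) =
      padOne fun j : Fin b => (w j.succ, t j) := by
    funext j
    simp only [padOne, Fin.val_succ, Fin.succ_mk, add_lt_add_iff_right]
    split_ifs <;> rfl
  have hpad : ∀ p ∈ List.replicate (n - b) (1 : G × unitInterval), p.1 = 1 := by
    simp +contextual [List.mem_replicate]
  rw [gammaWord, gammaWord, hletters, ofFn_padOne hbn, List.reverse_append,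
    List.reverse_replicate, A.Γ_append_of_fst_eq_one hpad]
  simp [padOne]

end Action

section Chains

variable [MetricSpace X] {A : HomotopyCoherentAction G X} {S : Set G} {k : ℕ}

/-- A chain with `zs = xs` has all distance terms zero. -/
theorem coherentDist_le_of_chainCond (Λ : ℝ) {p q : X × G} {l : ℕ} {xs : Fin (l + 1) → X}
    {a b : Fin l → G} (hchain : ChainCond A S k p.1 q.1 p.2 q.2 xs xs a b) :
    coherentDist A S k Λ p q ≤ l := by
  refine iInf_le_of_le l <| iInf_le_of_le xs <| iInf_le_of_le xs <| iInf_le_of_le a <|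
    iInf_le_of_le b <| iInf_le_of_le hchain ?_
  simp

theorem coherentDist_le_two_of_gammaWord (Λ : ℝ) (hS1 : (1 : G) ∈ S)
    {r s : Fin (k + 1) → G} (hr : ∀ j, r j ∈ S) (hs : ∀ j, s j ∈ S)
    (t u : Fin k → unitInterval) (z : X) {g g' : G}
    (hg : g * (List.ofFn r).reverse.prod = g' * (List.ofFn s).reverse.prod) :
    coherentDist A S k Λ (gammaWord A r t z, g) (gammaWord A s u z, g') ≤ 2 := by
  have hone : (List.ofFn (1 : Fin (k + 1) → G)).reverse.prod = 1 := by
    simp [List.ofFn_const]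
  refine coherentDist_le_of_chainCond (l := 2) Λ (xs := ![_, z, _])
    (a := ![1, (List.ofFn s).reverse.prod]) (b := ![(List.ofFn r).reverse.prod, 1])
    ⟨rfl, rfl, ?_, ?_⟩
  · generalize (List.ofFn r).reverse.prod = R at hg ⊢
    generalize (List.ofFn s).reverse.prod = R' at hg ⊢
    simp [List.ofFn_succ, ← mul_assoc, hg]
  · intro i
    fin_cases i
    · exact ⟨1, r, 1, t, fun _ => hS1, hr, hone.symm, rfl, gammaWord_one A _ _⟩
    · exact ⟨s, 1, u, 1, hs, fun _ => hS1, rfl, hone.symm, (gammaWord_one A _ _).symm⟩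

end Chains

theorem dist_translate_le_two_general {G : Type*} [Group G] {X : Type*} [MetricSpace X]
    (A : HomotopyCoherentAction G X) (S : Set G) (hS1 : (1 : G) ∈ S)
    (n : ℕ) (Λ : ℝ) (α : ℕ) (hα : α ≤ n)
    (b : ℕ) (hb : b < n) (γ : Fin b → G) (hγ : ∀ i, γ i ∈ S ^ α)
    (h : G) (hh : h ∈ S ^ α) (t : Fin b → unitInterval) (x : X) (g : G) :
    coherentDist A (S ^ n) n Λ
      (gammaWord A (Fin.snoc γ h) t x, g)
      (gammaWord A (Fin.snoc γ (1 : G)) t x, g * h) ≤ 2 := by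
  have hSn1 : (1 : G) ∈ S ^ n := Set.one_mem_pow hS1
  have hsnoc_mem : ∀ c ∈ S ^ n, ∀ j, (Fin.snoc γ c : Fin (b + 1) → G) j ∈ S ^ n :=
    fun c hc => Fin.lastCases (by simpa using hc)
      fun i => by simpa using Set.pow_subset_pow_right hS1 hα (hγ i)
  have hbn : b ≤ n := hb.le
  rw [← gammaWord_padOne A hbn, ← gammaWord_padOne A hbn (Fin.snoc γ 1)]
  refine coherentDist_le_two_of_gammaWord Λ hSn1
    (padOne_mem hSn1 (hsnoc_mem h (Set.pow_subset_pow_right hS1 hα hh)))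
    (padOne_mem hSn1 (hsnoc_mem 1 hSn1)) _ _ x ?_
  simp only [prod_reverse_ofFn_padOne (Nat.succ_le_succ hbn), prod_reverse_ofFn_snoc, one_mul,
    mul_assoc]

/-- For `α ≤ n`, `b < n`, `γ_1,…,γ_b, h ∈ S^α` and parameters `t_i`, the points
`(Γ(h,t_b,γ_b,…,γ_1,x), g)` and `(Γ(e,t_b,γ_b,…,γ_1,x), gh)` have `d_{S^n,n,Λ}`-distance
at most `2`. -/
theorem dist_translate_le_two {G : Type*} [Group G] {X : Type*} [MetricSpace X]
    (A : HomotopyCoherentAction G X) (S : Set G) (hSfin : S.Finite) (hS1 : (1 : G) ∈ S)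
    (hSsymm : S⁻¹ = S) (hSgen : Subgroup.closure S = ⊤)
    (n : ℕ) (Λ : ℝ) (hΛ : 0 < Λ) (α : ℕ) (hα : α ≤ n)
    (b : ℕ) (hb : b < n) (γ : Fin b → G) (hγ : ∀ i, γ i ∈ S ^ α)
    (h : G) (hh : h ∈ S ^ α) (t : Fin b → unitInterval) (x : X) (g : G) :
    coherentDist A (S ^ n) n Λ
      (gammaWord A (Fin.snoc γ h) t x, g)
      (gammaWord A (Fin.snoc γ (1 : G)) t x, g * h) ≤ 2 :=
  dist_translate_le_two_general A S hS1 n Λ α hα b hb γ hγ h hh t x g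
end
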